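/- In the braid group B_4, the word σ1⁻¹ σ1⁻¹ σ1⁻¹ σ2⁻¹ σ1 σ2⁻¹ σ2⁻¹ σ1⁻¹ σ3⁻¹ σ2 σ3⁻¹ (a braid representative of the knot 11n10) equals the product of the negative bands of its negative band decomposition with band centers {1, 2, 3, 6, 7, 9, 11}; in particular, this braid is quasinegative. -/

import Mathlib

/-- The Artin relations for the braid group with `m` generators
`σ_1, …, σ_m` (indexed by `Fin m`), i.e. the braid group `B_{m+1}`:
`σ_i σ_j = σ_j σ_i` for `|i - j| ≥ 2`, and
`σ_i σ_{i+1} σ_i = σ_{i+1} σ_i σ_{i+1}`. -/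
def braidRels (m : ℕ) : Set (FreeGroup (Fin m)) :=
  { r | (∃ i j : Fin m, (i : ℕ) + 2 ≤ (j : ℕ) ∧
          r = FreeGroup.of i * FreeGroup.of j * (FreeGroup.of i)⁻¹ * (FreeGroup.of j)⁻¹) ∨
        (∃ i j : Fin m, (i : ℕ) + 1 = (j : ℕ) ∧
          r = FreeGroup.of i * FreeGroup.of j * FreeGroup.of i *
              (FreeGroup.of j)⁻¹ * (FreeGroup.of i)⁻¹ * (FreeGroup.of j)⁻¹) }

/-- The braid group `B_{m+1}`, presented with `m` Artin generators.
Here index `i : Fin m` corresponds to the Artin generator `σ_{i+1}`. -/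
abbrev BraidGrp (m : ℕ) := PresentedGroup (braidRels m)

/-- The Artin generator `σ_{i+1}` of the braid group `B_{m+1}`. -/
def σ {m : ℕ} (i : Fin m) : BraidGrp m := PresentedGroup.of i

/-- A letter of a braid word: a generator index together with a sign
(`true` = the positive generator, `false` = its inverse). -/
abbrev Letter (m : ℕ) := Fin m × Bool

/-- The group element represented by a letter. -/
def letterEl {m : ℕ} (x : Letter m) : BraidGrp m :=
  if x.2 then σ x.1 else (σ x.1)⁻¹

/-- The group element represented by a braid word. -/
def wordProd {m : ℕ} (w : List (Letter m)) : BraidGrp m :=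
  (w.map letterEl).prod

/-- The band of the band decomposition of the word `w` with band centers `S`
(1-based positions) at center `p`: namely `α_p * x_p * α_p⁻¹`, where `x_p` is
the letter of `w` at position `p` and `α_p` is the product, in increasing
order of position, of the letters of `w` at positions `q < p` with `q ∉ S`. -/
def band {m : ℕ} (w : List (Letter m)) (S : List ℕ) (p : ℕ) : BraidGrp m :=
  let α : BraidGrp m :=
    wordProd (((w.zipIdx.map Prod.swap).filter fun qx => decide (qx.1 + 1 < p ∧ qx.1 + 1 ∉ S)).map Prod.snd)
  match w[p - 1]? with
  | some x => α * letterEl x * α⁻¹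
  | none => 1

/-- The product, in increasing order of band center, of the bands of the
band decomposition of the word `w` with band centers `S`. -/
def bandProd {m : ℕ} (w : List (Letter m)) (S : List ℕ) : BraidGrp m :=
  (S.map (band w S)).prod

/-- A positive band in the braid group: a conjugate `α σ_j α⁻¹` of a generator. -/
def IsPositiveBand {m : ℕ} (x : BraidGrp m) : Prop :=
  ∃ (α : BraidGrp m) (j : Fin m), x = α * σ j * α⁻¹

/-- A braid is quasipositive if it is a product of positive bands. -/
def IsQuasipositive {m : ℕ} (x : BraidGrp m) : Prop :=
  ∃ l : List (BraidGrp m), (∀ b ∈ l, IsPositiveBand b) ∧ x = l.prod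

/-- A negative band in the braid group: a conjugate `α σ_j⁻¹ α⁻¹` of the
inverse of a generator. -/
def IsNegativeBand {m : ℕ} (x : BraidGrp m) : Prop :=
  ∃ (α : BraidGrp m) (j : Fin m), x = α * (σ j)⁻¹ * α⁻¹

/-- A braid is quasinegative if it is a product of negative bands. -/
def IsQuasinegative {m : ℕ} (x : BraidGrp m) : Prop :=
  ∃ l : List (BraidGrp m), (∀ b ∈ l, IsNegativeBand b) ∧ x = l.prod

/-- The braid word for the knot `11n10` (letter `(i, true)` is `σ_(i+1)`,
`(i, false)` is `σ_(i+1)⁻¹`). -/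
def theWord : List (Letter 3) :=
  [(0, false), (0, false), (0, false), (1, false), (0, true), (1, false), (1, false), (0, false), (2, false), (1, true), (2, false)]

/-- The band centers. -/
def theCenters : List ℕ := [1, 2, 3, 6, 7, 9, 11]

/-!
Telescoping: if `α_p` is the product of the non-centre letters before position `p`, the bands
with centres `≤ n` multiply to `x_1 ⋯ x_n · α_{n+1}⁻¹`. So for any strictly increasing set of
centres the band product is the word times the inverse of the product of its non-centre letters.
For `11n10` those letters are `σ₂⁻¹ σ₁ σ₁⁻¹ σ₂`, which cancel freely, and all centres carry
inverse generators.
-/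

theorem List.filter_le_add_one_of_pairwise_lt {S : List ℕ} (hS : S.Pairwise (· < ·)) (n : ℕ) :
    S.filter (· ≤ n + 1) = S.filter (· ≤ n) ++ if n + 1 ∈ S then [n + 1] else [] := by
  induction S with
  | nil => simp
  | cons a t ih =>
    obtain ⟨ha, ht⟩ := List.pairwise_cons.mp hS
    have hnil : ∀ k ≤ a, t.filter (· ≤ k) = [] := fun k hk =>
      List.filter_eq_nil_iff.mpr fun b hb => by simpa using (ha b hb).trans_le' hk
    rcases lt_trichotomy a (n + 1) with hlt | rfl | hgt
    · simp [hlt.le, Nat.le_of_lt_succ hlt, hlt.ne', ih ht]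
    · simp [hnil]
    · have hmem : n + 1 ∉ t := fun h => (hgt.trans (ha _ h)).false
      simp [hnil (n + 1) hgt.le, hnil n (by omega), hgt.ne, hmem, hgt.not_ge,
        (Nat.lt_of_succ_lt hgt).not_ge]

namespace BandDecomposition

variable {m : ℕ} (w : List (Letter m)) (S : List ℕ)

/-- The element `α_p` conjugating the letter at centre `p` in `band w S p`. -/
def conjugator (p : ℕ) : BraidGrp m :=
  wordProd (((w.zipIdx.map Prod.swap).filter fun qx =>
    decide (qx.1 + 1 < p ∧ qx.1 + 1 ∉ S)).map Prod.snd)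

lemma wordProd_append (u v : List (Letter m)) :
    wordProd (u ++ v) = wordProd u * wordProd v := by
  simp [wordProd]

lemma wordProd_singleton (x : Letter m) : wordProd [x] = letterEl x := by
  simp [wordProd]

lemma band_eq {p : ℕ} {x : Letter m} (hx : w[p - 1]? = some x) :
    band w S p = conjugator w S p * letterEl x * (conjugator w S p)⁻¹ := by
  unfold band
  rw [hx]
  rfl

lemma isNegativeBand_band {p : ℕ} {j : Fin m} (hp : w[p - 1]? = some (j, false)) :
    IsNegativeBand (band w S p) :=
  ⟨conjugator w S p, j, by rw [band_eq w S hp]; rfl⟩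

lemma conjugator_eq_take (k : ℕ) :
    conjugator w S (k + 1) = wordProd ((((w.take k).zipIdx.map Prod.swap).filter fun qx =>
      decide (qx.1 + 1 ∉ S)).map Prod.snd) := by
  conv_lhs => rw [conjugator, ← List.take_append_drop k w]
  rw [List.zipIdx_append, List.map_append, List.filter_append]
  have hdrop : (((w.drop k).zipIdx (0 + (w.take k).length)).map Prod.swap).filter
      (fun qx => decide (qx.1 + 1 < k + 1 ∧ qx.1 + 1 ∉ S)) = [] := by
    refine List.filter_eq_nil_iff.mpr fun ⟨q, x⟩ hqx => ?_
    have := List.mem_zipIdx ((List.mem_map_swap _ _ _).mp hqx)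
    simp only [List.length_take, List.length_drop] at this
    simp only [decide_eq_true_eq, not_and]
    omega
  rw [hdrop, List.append_nil, List.filter_congr]
  rintro ⟨q, x⟩ hqx
  have := List.mem_zipIdx ((List.mem_map_swap _ _ _).mp hqx)
  simp only [List.length_take] at this
  simp only [decide_eq_decide, and_iff_right_iff_imp]
  omega

lemma conjugator_one : conjugator w S 1 = 1 := by
  simp [conjugator_eq_take w S 0, wordProd]

lemma conjugator_succ {n : ℕ} (hn : n < w.length) :
    conjugator w S (n + 2) =
      conjugator w S (n + 1) * if n + 1 ∈ S then 1 else letterEl w[n] := by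
  rw [conjugator_eq_take w S (n + 1), conjugator_eq_take w S n, List.take_add_one,
    List.getElem?_eq_getElem hn]
  simp only [Option.toList_some, List.zipIdx_append, List.zipIdx_singleton, List.map_append,
    List.filter_append, wordProd_append, List.length_take, Nat.min_eq_left hn.le]
  split_ifs with h <;> simp [h, wordProd]

variable {S} in
lemma prod_map_band_filter_le (hS : S.Pairwise (· < ·)) (hpos : ∀ p ∈ S, 0 < p) {n : ℕ}
    (hn : n ≤ w.length) :
    ((S.filter (· ≤ n)).map (band w S)).prod = wordProd (w.take n) * (conjugator w S (n + 1))⁻¹ := by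
  induction n with
  | zero =>
    have : S.filter (· ≤ 0) = [] :=
      List.filter_eq_nil_iff.mpr fun p hp => by simpa using (hpos p hp).ne'
    rw [this, conjugator_one]
    simp [wordProd]
  | succ n ih =>
    have hn' : n < w.length := hn
    rw [S.filter_le_add_one_of_pairwise_lt hS, List.map_append, List.prod_append, ih hn'.le,
      conjugator_succ w S hn', List.take_add_one, List.getElem?_eq_getElem hn']
    simp only [Option.toList_some, wordProd_append, wordProd_singleton]
    split_ifs
    · rw [List.map_singleton, List.prod_singleton, band_eq w S (List.getElem?_eq_getElem hn')]
      group
    · rw [List.map_nil, List.prod_nil]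
      group

variable {S} in
theorem bandProd_eq (hS : S.Pairwise (· < ·)) (hrange : ∀ p ∈ S, 0 < p ∧ p ≤ w.length) :
    bandProd w S = wordProd w * (conjugator w S (w.length + 1))⁻¹ := by
  have hfilter : S.filter (· ≤ w.length) = S :=
    List.filter_eq_self.mpr fun p hp => decide_eq_true (hrange p hp).2
  simpa only [bandProd, hfilter, List.take_length] using
    prod_map_band_filter_le w hS (fun p hp => (hrange p hp).1) le_rfl

variable {S} in
theorem isQuasinegative_bandProd (hS : ∀ p ∈ S, ∃ j, w[p - 1]? = some (j, false)) :
    IsQuasinegative (bandProd w S) := by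
  refine ⟨S.map (band w S), fun b hb => ?_, rfl⟩
  obtain ⟨p, hp, rfl⟩ := List.mem_map.mp hb
  obtain ⟨j, hj⟩ := hS p hp
  exact isNegativeBand_band w S hj

end BandDecomposition

/-- The braid representative of `11n10` equals the product of the bands of its
band decomposition with the given band centers; in particular it is quasinegative. -/
theorem knot_11n10_quasinegative :
    wordProd theWord = bandProd theWord theCenters ∧
      IsQuasinegative (wordProd theWord) := by
  have hnoncentre : BandDecomposition.conjugator theWord theCenters (theWord.length + 1) = 1 := by
    have : BandDecomposition.conjugator theWord theCenters (theWord.length + 1) =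
        wordProd [(1, false), (0, true), (0, false), (1, true)] := rfl
    simp [this, wordProd, letterEl]
  have hdecomp : wordProd theWord = bandProd theWord theCenters := by
    rw [BandDecomposition.bandProd_eq theWord (by decide) (by decide), hnoncentre, inv_one,
      mul_one]
  refine ⟨hdecomp, hdecomp ▸ BandDecomposition.isQuasinegative_bandProd theWord ?_⟩
  decide
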